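/- arXiv:2409.14251 — 2 statements merged into one kernel-verified Lean document; each statement's English description precedes it below -/
import Mathlib

section
/- Let (R, m) be a Noetherian local ring and let I and J be proper ideals of R such that the integral closure of I^a equals the integral closure of J^b for some positive integers a, b. If J has finite Łojasiewicz exponent, then so does I, and a·𝓛₀(I) = b·𝓛₀(J). -/
open Finset IsLocalRing

/-- The set of elements integral over an ideal `I`: `x` is integral over `I` if it satisfies
an equation `x ^ k + c 1 * x ^ (k-1) + ⋯ + c k = 0` with `c i ∈ I ^ i`. -/
def integralClosureIdeal {R : Type*} [CommRing R] (I : Ideal R) : Set R :=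
  {x | ∃ k : ℕ, 1 ≤ k ∧ ∃ c : ℕ → R, (∀ i, 1 ≤ i → i ≤ k → c i ∈ I ^ i) ∧
    x ^ k + ∑ i ∈ Finset.Icc 1 k, c i * x ^ (k - i) = 0}

/-- `Λ(I)`: the set of rationals `r/s` (as real numbers) with `r, s` positive integers such that
`m ^ r` is contained in the integral closure of `I ^ s`. -/
def Lambda (R : Type*) [CommRing R] [IsLocalRing R] (I : Ideal R) : Set ℝ :=
  {x | ∃ r s : ℕ, 0 < r ∧ 0 < s ∧
    ((maximalIdeal R ^ r : Ideal R) : Set R) ⊆ integralClosureIdeal (I ^ s) ∧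
    x = (r : ℝ) / (s : ℝ)}

/-- The Łojasiewicz exponent `𝓛₀(I)`, the infimum of `Λ(I)`. -/
noncomputable def Loj (R : Type*) [CommRing R] [IsLocalRing R] (I : Ideal R) : ℝ :=
  sInf (Lambda R I)

/-!
An element `x` is integral over `A` exactly when `A` is a reduction of `A + (x)`, i.e.
`(A + (x)) ^ (n + 1) = A * (A + (x)) ^ n` for some `n`: the integral equation gives the
reduction, and conversely the determinantal trick applied to multiplication by `x` on the
finitely generated module `(A + (x)) ^ n` gives an integral equation. Reductions compose and
multiply, so in a Noetherian ring, writing `cl` for the integral closure, `K ⊆ cl L` implies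
`cl K ⊆ cl L` and `K ^ n ⊆ cl (L ^ n)`. Hence `J ^ b ⊆ cl (I ^ a)` turns `m ^ r ⊆ cl (J ^ s)`
into `m ^ (r b) ⊆ cl (I ^ (a s))`, i.e. `(b / a) • Λ(J) ⊆ Λ(I)`; by symmetry
`Λ(I) = (b / a) • Λ(J)`, and the infima scale accordingly.
-/

open Polynomial

namespace Ideal

variable {R : Type*} [CommRing R]

def IsReduction (A B : Ideal R) : Prop := A ≤ B ∧ ∃ n : ℕ, B ^ (n + 1) = A * B ^ n

theorem sup_pow_succ_le (A X : Ideal R) (j : ℕ) :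
    (A ⊔ X) ^ (j + 1) ≤ A * (A ⊔ X) ^ j ⊔ X ^ (j + 1) := by
  induction j with
  | zero => rw [pow_zero, mul_one, zero_add, pow_one, pow_one]
  | succ j ih =>
    rw [pow_succ' _ (j + 1), sup_mul]
    refine sup_le le_sup_left ?_
    calc X * (A ⊔ X) ^ (j + 1) ≤ X * (A * (A ⊔ X) ^ j ⊔ X ^ (j + 1)) := mul_mono_right ih
      _ = A * (X * (A ⊔ X) ^ j) ⊔ X ^ (j + 1 + 1) := by
        rw [mul_sup, mul_left_comm, ← pow_succ']
      _ ≤ A * ((A ⊔ X) * (A ⊔ X) ^ j) ⊔ X ^ (j + 1 + 1) := by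
        gcongr
        exact le_sup_right
      _ = A * (A ⊔ X) ^ (j + 1) ⊔ X ^ (j + 1 + 1) := by rw [← pow_succ']

namespace IsReduction

variable {A B C A' B' : Ideal R}

theorem refl (A : Ideal R) : IsReduction A A := ⟨le_rfl, 0, by simp⟩

theorem pow_add_eq {n : ℕ} (hn : B ^ (n + 1) = A * B ^ n) (k : ℕ) :
    B ^ (n + k) = A ^ k * B ^ n := by
  induction k with
  | zero => simp
  | succ k ih => rw [← add_assoc, pow_succ', ih, mul_left_comm, ← pow_succ', hn]; ring

theorem pow_succ_eq_of_le {n m : ℕ} (hn : B ^ (n + 1) = A * B ^ n) (hnm : n ≤ m) :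
    B ^ (m + 1) = A * B ^ m := by
  obtain ⟨k, rfl⟩ := Nat.exists_eq_add_of_le hnm
  rw [add_assoc, pow_add_eq hn, pow_add_eq hn]
  ring

theorem trans (hAB : IsReduction A B) (hBC : IsReduction B C) : IsReduction A C := by
  obtain ⟨hAB, n, hn⟩ := hAB
  obtain ⟨hBC, m, hm⟩ := hBC
  refine ⟨hAB.trans hBC, m + n, ?_⟩
  rw [add_assoc, pow_add_eq hm, pow_add_eq hm, hn]
  ring

theorem mul (h : IsReduction A B) (h' : IsReduction A' B') : IsReduction (A * A') (B * B') := by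
  obtain ⟨hAB, n, hn⟩ := h
  obtain ⟨hAB', n', hn'⟩ := h'
  refine ⟨mul_mono hAB hAB', n + n', ?_⟩
  rw [mul_pow, mul_pow, pow_succ_eq_of_le hn (Nat.le_add_right n n'),
    pow_succ_eq_of_le hn' (Nat.le_add_left n' n)]
  ring

theorem pow (h : IsReduction A B) (n : ℕ) : IsReduction (A ^ n) (B ^ n) := by
  induction n with
  | zero => simpa using refl (1 : Ideal R)
  | succ n ih => simpa only [pow_succ] using ih.mul h

end IsReduction

end Ideal

open Ideal

section

variable {R : Type*} [CommRing R] {A B K L : Ideal R} {x : R}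

theorem subset_integralClosureIdeal (A : Ideal R) : (A : Set R) ⊆ integralClosureIdeal A := by
  intro x hx
  refine ⟨1, le_rfl, fun _ => -x, fun i h1 h2 => ?_, by simp⟩
  obtain rfl : i = 1 := le_antisymm h2 h1
  simpa using neg_mem hx

theorem integralClosureIdeal_mono (h : A ≤ B) :
    integralClosureIdeal A ⊆ integralClosureIdeal B := by
  rintro x ⟨k, hk, c, hc, heq⟩
  exact ⟨k, hk, c, fun i h1 h2 => Ideal.pow_right_mono h i (hc i h1 h2), heq⟩

theorem pow_succ_mem_mul_sup_span_singleton_pow (hx : x ∈ integralClosureIdeal A) :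
    ∃ j : ℕ, x ^ (j + 1) ∈ A * (A ⊔ span {x}) ^ j := by
  obtain ⟨k, hk, c, hc, hsum⟩ := hx
  obtain ⟨j, rfl⟩ := Nat.exists_eq_add_of_le' hk
  refine ⟨j, ?_⟩
  rw [eq_neg_of_add_eq_zero_left hsum]
  refine neg_mem (sum_mem fun i hi => ?_)
  obtain ⟨hi1, hi2⟩ := Finset.mem_Icc.mp hi
  obtain ⟨i, rfl⟩ := Nat.exists_eq_add_of_le' hi1
  set E := A ⊔ span {x}
  have hle : A ^ (i + 1) * E ^ (j + 1 - (i + 1)) ≤ A * E ^ j :=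
    calc A ^ (i + 1) * E ^ (j + 1 - (i + 1)) = A * (A ^ i * E ^ (j - i)) := by
          rw [pow_succ', Nat.add_sub_add_right, mul_assoc]
      _ ≤ A * (E ^ i * E ^ (j - i)) :=
          mul_mono_right (mul_mono_left (Ideal.pow_right_mono le_sup_left i))
      _ = A * E ^ j := by rw [← pow_add, Nat.add_sub_cancel' (by omega)]
  exact hle (mul_mem_mul (hc _ hi1 hi2)
    (pow_mem_pow (mem_sup_right (mem_span_singleton_self x)) _))

theorem isReduction_sup_span_singleton (hx : x ∈ integralClosureIdeal A) :
    IsReduction A (A ⊔ span {x}) := by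
  obtain ⟨j, hj⟩ := pow_succ_mem_mul_sup_span_singleton_pow hx
  refine ⟨le_sup_left, j, le_antisymm ?_ ?_⟩
  · refine (sup_pow_succ_le _ _ j).trans (sup_le le_rfl ?_)
    rwa [span_singleton_pow, span_singleton_le_iff_mem]
  · rw [pow_succ']
    exact mul_mono_left le_sup_left

theorem isReduction_sup_span_finset (s : Finset R)
    (hs : ∀ g ∈ s, g ∈ integralClosureIdeal L) : IsReduction L (L ⊔ span (s : Set R)) := by
  classical
  induction s using Finset.induction_on with
  | empty => simpa using IsReduction.refl L
  | insert g t _ ih =>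
    have hg : g ∈ integralClosureIdeal (L ⊔ span (t : Set R)) :=
      integralClosureIdeal_mono le_sup_left (hs g (mem_insert_self g t))
    have hext := isReduction_sup_span_singleton hg
    rw [sup_assoc, ← span_union, Set.union_singleton, ← coe_insert] at hext
    exact (ih fun g' hg' => hs g' (mem_insert_of_mem hg')).trans hext

theorem exists_monic_coeff_mem_pow_forall_eval_mul_eq_zero {N : Ideal R} (hN : N.FG)
    (hx : ∀ y ∈ N, x * y ∈ A * N) :
    ∃ p : R[X], p.Monic ∧ (∀ k, p.coeff k ∈ A ^ (p.natDegree - k)) ∧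
      ∀ y ∈ N, p.eval x * y = 0 := by
  have : Module.Finite R N := Module.Finite.iff_fg.mpr hN
  let f : Module.End R N := algebraMap R _ x
  have hrange : LinearMap.range f ≤ A • ⊤ := by
    rintro _ ⟨y, rfl⟩
    rw [Submodule.mem_smul_top_iff]
    simpa [f, Module.algebraMap_end_apply] using hx y y.2
  obtain ⟨p, hp, -, hcoeff, hf⟩ :=
    LinearMap.exists_monic_and_natDegree_eq_and_coeff_mem_pow_and_aeval_eq_zero R f A hrange
  refine ⟨p, hp, hcoeff, fun y hy => ?_⟩
  rw [aeval_algebraMap_apply_eq_algebraMap_eval] at hf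
  simpa [Module.algebraMap_end_apply] using
    congr_arg (fun g : Module.End R N => ((g ⟨y, hy⟩ : N) : R)) hf

theorem mem_integralClosureIdeal_of_monic {p : R[X]} (hp : p.Monic)
    (hcoeff : ∀ k, p.coeff k ∈ A ^ (p.natDegree - k)) (hx : p.eval x = 0) :
    x ∈ integralClosureIdeal A := by
  set k := p.natDegree
  rcases Nat.eq_zero_or_pos k with hk | hk
  · rw [hp.natDegree_eq_zero.mp hk, eval_one] at hx
    exact subset_integralClosureIdeal A (by rw [← mul_one x, hx, mul_zero]; exact A.zero_mem)
  refine ⟨k, hk, fun i => p.coeff (k - i), fun i _ hi => ?_, ?_⟩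
  · simpa [Nat.sub_sub_self hi] using hcoeff (k - i)
  · have hreflect : ∑ i ∈ Icc 1 k, p.coeff (k - i) * x ^ (k - i) =
        ∑ i ∈ range k, p.coeff i * x ^ i := by
      rw [← Ico_add_one_right_eq_Icc,
        sum_Ico_reflect (fun i => p.coeff i * x ^ i) 1 (le_refl (k + 1)),
        Nat.sub_self, Nat.add_sub_cancel, range_eq_Ico]
    conv_rhs => rw [← hx, hp.as_sum]
    simp [hreflect, eval_finsetSum, k]

end

section Noetherian

variable {R : Type*} [CommRing R] [IsNoetherianRing R] {A B K L : Ideal R} {x : R}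

theorem Ideal.IsReduction.mem_integralClosureIdeal (h : IsReduction A B) (hx : x ∈ B) :
    x ∈ integralClosureIdeal A := by
  obtain ⟨-, n, hn⟩ := h
  obtain ⟨p, hp, hcoeff, hzero⟩ := exists_monic_coeff_mem_pow_forall_eval_mul_eq_zero
    (IsNoetherian.noetherian (B ^ n)) fun y hy => hn ▸ pow_succ' B n ▸ mul_mem_mul hx hy
  rcases subsingleton_or_nontrivial R with _ | _
  · exact subset_integralClosureIdeal A (Subsingleton.elim 0 x ▸ A.zero_mem)
  refine mem_integralClosureIdeal_of_monic (hp.mul (monic_X_pow n)) (fun k => ?_) ?_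
  · rw [coeff_mul_X_pow', hp.natDegree_mul (monic_X_pow n), natDegree_X_pow]
    split_ifs with hnk
    · convert hcoeff (k - n) using 2
      omega
    · exact zero_mem _
  · simpa using hzero _ (pow_mem_pow hx n)

theorem isReduction_sup_of_subset (h : (K : Set R) ⊆ integralClosureIdeal L) :
    IsReduction L (L ⊔ K) := by
  obtain ⟨s, rfl⟩ := IsNoetherian.noetherian K
  exact isReduction_sup_span_finset s fun g hg => h (subset_span hg)

theorem integralClosureIdeal_subset_of_subset (h : (K : Set R) ⊆ integralClosureIdeal L) :
    integralClosureIdeal K ⊆ integralClosureIdeal L := fun x hx =>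
  ((isReduction_sup_of_subset h).trans
      (isReduction_sup_span_singleton (integralClosureIdeal_mono le_sup_right hx))
    ).mem_integralClosureIdeal (mem_sup_right (mem_span_singleton_self x))

theorem pow_subset_integralClosureIdeal_pow (h : (K : Set R) ⊆ integralClosureIdeal L) (n : ℕ) :
    ((K ^ n : Ideal R) : Set R) ⊆ integralClosureIdeal (L ^ n) := fun _ hx =>
  ((isReduction_sup_of_subset h).pow n).mem_integralClosureIdeal
    (Ideal.pow_right_mono le_sup_right n hx)

end Noetherian

open scoped Pointwise

theorem smul_Lambda_subset {R : Type*} [CommRing R] [IsNoetherianRing R] [IsLocalRing R]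
    {I J : Ideal R} {a b : ℕ} (ha : 0 < a) (hb : 0 < b)
    (h : ((J ^ b : Ideal R) : Set R) ⊆ integralClosureIdeal (I ^ a)) :
    ((b : ℝ) / a) • Lambda R J ⊆ Lambda R I := by
  rintro _ ⟨_, ⟨r, s, hr, hs, hsub, rfl⟩, rfl⟩
  refine ⟨r * b, a * s, Nat.mul_pos hr hb, Nat.mul_pos ha hs, ?_, ?_⟩
  · rw [pow_mul]
    refine (pow_subset_integralClosureIdeal_pow hsub b).trans
      (integralClosureIdeal_subset_of_subset ?_)
    rw [← pow_mul, mul_comm s, pow_mul, pow_mul]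
    exact pow_subset_integralClosureIdeal_pow h s
  · have : (s : ℝ) ≠ 0 := by positivity
    push_cast
    rw [smul_eq_mul]
    field_simp

theorem loj_of_projEquiv_general
    {R : Type*} [CommRing R] [IsNoetherianRing R] [IsLocalRing R]
    (I J : Ideal R) (a b : ℕ) (ha : 0 < a) (hb : 0 < b)
    (h : integralClosureIdeal (I ^ a) = integralClosureIdeal (J ^ b))
    (hJfin : (Lambda R J).Nonempty) :
    (Lambda R I).Nonempty ∧ (a : ℝ) * Loj R I = (b : ℝ) * Loj R J := by
  have hΛ : Lambda R I = ((b : ℝ) / a) • Lambda R J := by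
    refine Set.Subset.antisymm ?_ (smul_Lambda_subset ha hb (h ▸ subset_integralClosureIdeal _))
    rw [Set.subset_smul_set_iff₀ (by positivity), inv_div]
    exact smul_Lambda_subset hb ha (h.symm ▸ subset_integralClosureIdeal _)
  refine ⟨hΛ ▸ hJfin.smul_set, ?_⟩
  rw [Loj, Loj, hΛ, Real.sInf_smul_of_nonneg (by positivity), smul_eq_mul]
  field_simp

theorem loj_of_projEquiv
    {R : Type*} [CommRing R] [IsNoetherianRing R] [IsLocalRing R]
    (I J : Ideal R) (hI : I ≠ ⊤) (hJ : J ≠ ⊤) (a b : ℕ) (ha : 0 < a) (hb : 0 < b)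
    (h : integralClosureIdeal (I ^ a) = integralClosureIdeal (J ^ b))
    (hJfin : (Lambda R J).Nonempty) :
    (Lambda R I).Nonempty ∧ (a : ℝ) * Loj R I = (b : ℝ) * Loj R J :=
  loj_of_projEquiv_general I J a b ha hb h hJfin
end

section
/- Let (R, m) be a Noetherian local domain with m ≠ 0 satisfying condition (H), and let I be a proper ideal of R having finite Łojasiewicz exponent. Then m·I has finite Łojasiewicz exponent and 𝓛₀(m·I) = 𝓛₀(I) + 1. -/
open Finset IsLocalRing

/-! In a Noetherian domain, `K ⊆ integralClosureIdeal J` holds iff `K * M ≤ J * M` for some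
nonzero ideal `M`: one way by the determinant trick, the other way with an ideal `M` built from
an equation of integral dependence. In this form a nonzero factor `N` cancels: `N * K` lies in
the integral closure of `N * J` iff `K` lies in that of `J`. Taking `N = m ^ s` gives
`m ^ r ⊆ closure (I ^ s) ↔ m ^ (r + s) ⊆ closure ((m * I) ^ s)`, and condition (H), applied
through `(m * I) ^ s ≤ m ^ (2 * s)`, shows that every `r / s ∈ Λ(m * I)` has `r ≥ 2 * s`, hence
arises in this way. So `Λ(m * I) = Λ(I) + 1`, and the infima differ by `1`. -/

section IntegralClosure

variable {R : Type*} [CommRing R]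

theorem integralClosureIdeal_mono_s9 {J K : Ideal R} (h : J ≤ K) :
    integralClosureIdeal J ⊆ integralClosureIdeal K := by
  rintro x ⟨k, hk, c, hc, hx⟩
  exact ⟨k, hk, c, fun i h₁ h₂ => Ideal.pow_right_mono h i (hc i h₁ h₂), hx⟩

open Polynomial in
theorem mem_integralClosureIdeal_of_isRoot [Nontrivial R] {J : Ideal R} {p : R[X]}
    (hp : p.Monic) (hcoeff : ∀ k, p.coeff k ∈ J ^ (p.natDegree - k)) {z : R}
    (hz : p.IsRoot z) : z ∈ integralClosureIdeal J := by
  set n := p.natDegree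
  have hn : 1 ≤ n := Nat.one_le_iff_ne_zero.mpr fun h₀ => by
    simp [hp.natDegree_eq_zero.mp h₀] at hz
  refine ⟨n, hn, fun i => p.coeff (n - i), fun i _ hi => ?_, ?_⟩
  · simpa only [Nat.sub_sub_self hi] using hcoeff (n - i)
  · have hIcc : ∀ f : ℕ → R, ∑ i ∈ Icc 1 n, f i = ∑ i ∈ range n, f (i + 1) := fun f => by
      rw [range_eq_Ico, sum_Ico_add', zero_add, Ico_add_one_right_eq_Icc]
    rw [← hz.eq_zero, eval_eq_sum_range, ← sum_range_reflect, sum_range_succ', hIcc]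
    simp [n, hp.coeff_natDegree, add_comm]

variable [IsDomain R]

theorem mem_integralClosureIdeal_of_span_singleton_mul_le {J M : Ideal R} (hM : M.FG)
    (hM₀ : M ≠ ⊥) {z : R} (hz : Ideal.span {z} * M ≤ J * M) : z ∈ integralClosureIdeal J := by
  have : Module.Finite R M := Module.Finite.iff_fg.mpr hM
  obtain ⟨p, hp, -, hcoeff, hpz⟩ :=
    LinearMap.exists_monic_and_natDegree_eq_and_coeff_mem_pow_and_aeval_eq_zero R
      (algebraMap R (Module.End R M) z) J (by
        rintro _ ⟨y, rfl⟩
        rw [Submodule.mem_smul_top_iff, Ideal.smul_eq_mul]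
        exact hz (Ideal.mul_mem_mul (Ideal.mem_span_singleton_self z) y.2))
  obtain ⟨b, hbM, hb₀⟩ := (Submodule.ne_bot_iff M).mp hM₀
  refine mem_integralClosureIdeal_of_isRoot hp hcoeff ?_
  have hpb : p.eval z * b = 0 := by
    have := congr($hpz ⟨b, hbM⟩)
    rw [Polynomial.aeval_algebraMap_apply_eq_algebraMap_eval] at this
    simpa using congr(($this : R))
  exact (mul_eq_zero.mp hpb).resolve_right hb₀

theorem exists_span_singleton_mul_le_of_mem_integralClosureIdeal {J : Ideal R} {z : R}
    (hz : z ∈ integralClosureIdeal J) : ∃ M : Ideal R, M ≠ ⊥ ∧ Ideal.span {z} * M ≤ J * M := by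
  obtain rfl | hz₀ := eq_or_ne z 0
  · exact ⟨⊤, top_ne_bot, by simp⟩
  obtain ⟨k, hk, c, hc, hzk⟩ := hz
  set Z := Ideal.span {z}
  -- `M = J ^ (k - 1) + J ^ (k - 2) z + ⋯ + z ^ (k - 1)`, stable under `z` modulo `J * M`.
  set M : Ideal R := ⨆ i : Fin k, J ^ (i : ℕ) * Z ^ (k - 1 - i)
  have hterm : ∀ i, 1 ≤ i → i ≤ k → J ^ i * Z ^ (k - i) ≤ J * M := by
    intro i h₁ h₂
    obtain ⟨j, rfl⟩ : ∃ j, i = j + 1 := ⟨i - 1, by omega⟩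
    rw [pow_succ', mul_assoc, show k - (j + 1) = k - 1 - j by omega]
    exact Ideal.mul_mono_right
      (le_iSup (fun i : Fin k => J ^ (i : ℕ) * Z ^ (k - 1 - i)) ⟨j, by omega⟩)
  have hZk : Z ^ k ≤ J * M := by
    rw [Ideal.span_singleton_pow, Ideal.span_singleton_le_iff_mem, eq_neg_of_add_eq_zero_left hzk]
    refine neg_mem (sum_mem fun i hi => ?_)
    obtain ⟨h₁, h₂⟩ := mem_Icc.mp hi
    exact hterm i h₁ h₂ (Ideal.mul_mem_mul (hc i h₁ h₂)
      (Ideal.pow_mem_pow (Ideal.mem_span_singleton_self z) _))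
  refine ⟨M, (Submodule.ne_bot_iff M).mpr ⟨z ^ (k - 1), ?_, pow_ne_zero _ hz₀⟩, ?_⟩
  · refine le_iSup (fun i : Fin k => J ^ (i : ℕ) * Z ^ (k - 1 - i)) ⟨0, hk⟩ ?_
    simpa using Ideal.pow_mem_pow (Ideal.mem_span_singleton_self z) (k - 1)
  · rw [Ideal.mul_iSup]
    refine iSup_le fun ⟨i, hi⟩ => ?_
    rw [mul_left_comm, ← pow_succ', show k - 1 - i + 1 = k - i by omega]
    rcases Nat.eq_zero_or_pos i with rfl | hi₀
    · simpa using hZk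
    · exact hterm i hi₀ hi.le

variable [IsNoetherianRing R]

theorem subset_integralClosureIdeal_iff {K J : Ideal R} :
    (K : Set R) ⊆ integralClosureIdeal J ↔ ∃ M : Ideal R, M ≠ ⊥ ∧ K * M ≤ J * M := by
  constructor
  · intro h
    induction K, IsNoetherian.noetherian K using Submodule.fg_induction with
    | singleton x =>
      exact exists_span_singleton_mul_le_of_mem_integralClosureIdeal
        (h (Ideal.mem_span_singleton_self x))
    | sup K₁ K₂ _ _ ih₁ ih₂ =>
      obtain ⟨M₁, hM₁, h₁⟩ := ih₁ fun x hx => h (Ideal.mem_sup_left hx)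
      obtain ⟨M₂, hM₂, h₂⟩ := ih₂ fun x hx => h (Ideal.mem_sup_right hx)
      refine ⟨M₁ * M₂, by simp [hM₁, hM₂], ?_⟩
      rw [Ideal.sup_mul]
      refine sup_le ?_ ?_
      · calc K₁ * (M₁ * M₂) = K₁ * M₁ * M₂ := (mul_assoc _ _ _).symm
          _ ≤ J * M₁ * M₂ := Ideal.mul_mono_left h₁
          _ = J * (M₁ * M₂) := mul_assoc _ _ _
      · calc K₂ * (M₁ * M₂) = K₂ * M₂ * M₁ := by ring
          _ ≤ J * M₂ * M₁ := Ideal.mul_mono_left h₂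
          _ = J * (M₁ * M₂) := by ring
  · rintro ⟨M, hM₀, hKM⟩ z hz
    exact mem_integralClosureIdeal_of_span_singleton_mul_le (IsNoetherian.noetherian M) hM₀
      ((Ideal.mul_mono_left ((Ideal.span_singleton_le_iff_mem K).mpr hz)).trans hKM)

theorem mul_subset_integralClosureIdeal_mul_iff {N K J : Ideal R} (hN : N ≠ ⊥) :
    ((N * K : Ideal R) : Set R) ⊆ integralClosureIdeal (N * J) ↔
      (K : Set R) ⊆ integralClosureIdeal J := by
  simp only [subset_integralClosureIdeal_iff]
  constructor
  · rintro ⟨M, hM, h⟩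
    refine ⟨N * M, by simp [hN, hM], ?_⟩
    simpa only [mul_assoc, mul_left_comm K, mul_left_comm J] using h
  · rintro ⟨M, hM, h⟩
    refine ⟨M, hM, ?_⟩
    simpa only [mul_assoc] using (Ideal.mul_mono_right h : N * (K * M) ≤ N * (J * M))

end IntegralClosure

section Lojasiewicz

variable {R : Type*} [CommRing R] [IsLocalRing R]

theorem Lambda_bddBelow (I : Ideal R) : BddBelow (Lambda R I) :=
  ⟨0, by rintro _ ⟨r, s, -, -, -, rfl⟩; positivity⟩

theorem Lambda_maximalIdeal_mul [IsDomain R] [IsNoetherianRing R] (hm : maximalIdeal R ≠ ⊥)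
    (hH : ∀ r s : ℕ, 0 < r → 0 < s →
      ((maximalIdeal R ^ r : Ideal R) : Set R) ⊆ integralClosureIdeal (maximalIdeal R ^ s) →
      s ≤ r)
    {I : Ideal R} (hI : I ≤ maximalIdeal R) :
    Lambda R (maximalIdeal R * I) = (· + 1) '' Lambda R I := by
  set m := maximalIdeal R
  have hm_pow : ∀ s, m ^ s ≠ ⊥ := fun s => by simpa using pow_ne_zero s hm
  ext y
  constructor
  · rintro ⟨r, s, hr, hs, h, rfl⟩
    have h2s : 2 * s ≤ r := hH r (2 * s) hr (by omega) (h.trans (integralClosureIdeal_mono_s9 (by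
      rw [pow_mul, sq]
      exact Ideal.pow_right_mono (Ideal.mul_mono_right hI) s)))
    refine ⟨((r - s : ℕ) : ℝ) / s, ⟨r - s, s, by omega, hs, ?_, rfl⟩, ?_⟩
    · rwa [← mul_subset_integralClosureIdeal_mul_iff (hm_pow s), ← pow_add, ← mul_pow,
        Nat.add_sub_cancel' (by omega)]
    · rw [Nat.cast_sub (by omega)]
      field_simp
      ring
  · rintro ⟨_, ⟨r, s, hr, hs, h, rfl⟩, rfl⟩
    refine ⟨s + r, s, by omega, hs, ?_, ?_⟩
    · rwa [pow_add, mul_pow, mul_subset_integralClosureIdeal_mul_iff (hm_pow s)]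
    · field_simp
      push_cast
      ring

end Lojasiewicz

theorem loj_maximalIdeal_mul
    {R : Type*} [CommRing R] [IsDomain R] [IsNoetherianRing R] [IsLocalRing R]
    (hm : maximalIdeal R ≠ ⊥)
    (hH : ∀ r s : ℕ, 0 < r → 0 < s →
      ((maximalIdeal R ^ r : Ideal R) : Set R) ⊆ integralClosureIdeal (maximalIdeal R ^ s) →
      s ≤ r)
    (I : Ideal R) (hI : I ≠ ⊤) (hIfin : (Lambda R I).Nonempty) :
    (Lambda R (maximalIdeal R * I)).Nonempty ∧
      Loj R (maximalIdeal R * I) = Loj R I + 1 := by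
  have hΛ := Lambda_maximalIdeal_mul hm hH (le_maximalIdeal hI)
  refine ⟨hΛ ▸ hIfin.image _, ?_⟩
  rw [Loj, Loj, hΛ]
  exact ((OrderIso.addRight (1 : ℝ)).map_csInf' hIfin (Lambda_bddBelow I)).symm
end
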